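/- Let A be a Hilbert algebra and n ∈ ℕ. If the poset of meet irreducible implicative filters of A contains a chain F₀ ⊊ F₁ ⊊ ⋯ ⊊ Fₙ, then there exists a chain a₀ < a₁ < ⋯ < aₙ < 1 in A such that {a₀, …, aₙ, 1} is a subuniverse of A (i.e., aᵢ → aⱼ = aⱼ for j < i) and aₙ ∉ F₀. -/
import Mathlib


structure HilbertAlgebra (A : Type*) where
  imp : A → A → A
  one : A
  one_eq : ∀ a : A, imp a a = one
  K : ∀ a b : A, imp a (imp b a) = one
  S : ∀ a b c : A, imp (imp a (imp b c)) (imp (imp a b) (imp a c)) = one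
  antisymm : ∀ a b : A, imp a b = one → imp b a = one → a = b

namespace HilbertAlgebra

variable {A : Type*} (H : HilbertAlgebra A)

/-- The order of a Hilbert algebra: `a ≤ b` iff `a → b = 1`. -/
def le (a b : A) : Prop := H.imp a b = H.one

/-- Implicative filters: contain `1` and are closed under modus ponens. -/
def IsFilter (F : Set A) : Prop :=
  H.one ∈ F ∧ ∀ a b : A, a ∈ F → H.imp a b ∈ F → b ∈ F

/-- The implicative filter generated by a set `X`. -/
def Fg (X : Set A) : Set A := ⋂₀ {F : Set A | H.IsFilter F ∧ X ⊆ F}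

/-- Meet irreducible implicative filters. -/
def MeetIrred (F : Set A) : Prop :=
  H.IsFilter F ∧ F ≠ Set.univ ∧
    ∀ G K : Set A, H.IsFilter G → H.IsFilter K → F ⊂ G → F ⊂ K → F ≠ G ∩ K

/-- The terms `dₙ`. -/
def d : (n : ℕ) → (Fin (n + 1) → A) → A
  | 0, x => x 0
  | n + 1, x =>
    H.imp
      (H.imp (H.imp (x (Fin.last (n + 1))) (d n fun i => x i.castSucc))
        (x (Fin.last (n + 1))))
      (x (Fin.last (n + 1)))

end HilbertAlgebra

namespace HilbertAlgebra

variable {A : Type*} (H : HilbertAlgebra A)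

lemma imp_one' (a : A) : H.imp a H.one = H.one := by
  conv_lhs => rw [← H.one_eq a]
  exact H.K a a

lemma mp' {a b : A} (h1 : H.imp a b = H.one) (h2 : a = H.one) : b = H.one :=
  H.antisymm b H.one (H.imp_one' b) (h2 ▸ h1)

lemma trans' {a b c : A} (h1 : H.imp a b = H.one) (h2 : H.imp b c = H.one) :
    H.imp a c = H.one := by
  have h3 : H.imp a (H.imp b c) = H.one := by rw [h2]; exact H.imp_one' a
  exact H.mp' (H.mp' (H.S a b c) h3) h1

lemma assertion (a b : A) : H.imp a (H.imp (H.imp a b) b) = H.one := by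
  have s := H.mp' (H.S (H.imp a b) a b) (H.one_eq (H.imp a b))
  exact H.trans' (H.K a (H.imp a b)) s

lemma one_imp (a : A) : H.imp H.one a = a :=
  H.antisymm _ _ (H.mp' (H.assertion H.one a) rfl) (H.K a H.one)

lemma anti {a b : A} (c : A) (h : H.imp a b = H.one) :
    H.imp (H.imp b c) (H.imp a c) = H.one := by
  have s := H.S a b c
  rw [h, H.one_imp] at s
  exact H.trans' (H.K (H.imp b c) a) s

lemma contract (a b : A) : H.imp a (H.imp a b) = H.imp a b := by
  have s := H.S a (H.imp a b) b
  rw [H.assertion a b, H.one_imp] at s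
  exact H.antisymm _ _ s (H.K (H.imp a b) a)

lemma flip' {x y z : A} (h : H.imp x (H.imp y z) = H.one) :
    H.imp y (H.imp x z) = H.one :=
  H.trans' (H.assertion y z) (H.anti z h)

lemma thmB (a b c : A) :
    H.imp (H.imp a b) (H.imp (H.imp b c) (H.imp a c)) = H.one :=
  H.flip' (H.trans' (H.K (H.imp b c) a) (H.S a b c))

lemma lemA (D w : A) :
    H.imp D (H.imp (H.imp (H.imp w D) w) w) = H.one :=
  H.trans' (H.K D w) (H.assertion (H.imp w D) w)

lemma lemB (D w : A) :
    H.imp (H.imp (H.imp (H.imp w D) w) w) D = D := by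
  set p := H.imp w D with hp
  set E := H.imp (H.imp p w) w with hE
  have hwE : H.imp w E = H.one := H.K w (H.imp p w)
  have h1 : H.imp (H.imp E D) (H.imp w D) = H.one := H.anti D hwE
  have h2 : H.imp p E = H.one := H.assertion p w
  have hsE : H.imp (H.imp E D) E = H.one := H.trans' h1 h2
  have h3 := H.anti D hsE
  rw [H.contract] at h3
  exact H.antisymm _ _ h3 (H.K D E)

lemma filt_up {F : Set A} (hF : H.IsFilter F) {a b : A} (ha : a ∈ F)
    (h : H.imp a b = H.one) : b ∈ F :=
  hF.2 a b ha (by rw [h]; exact hF.1)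

lemma modF_trans {F : Set A} (hF : H.IsFilter F) {a b c : A}
    (h1 : H.imp a b ∈ F) (h2 : H.imp b c ∈ F) : H.imp a c ∈ F := by
  have t : H.imp (H.imp b c) (H.imp (H.imp a b) (H.imp a c)) = H.one :=
    H.trans' (H.K (H.imp b c) a) (H.S a b c)
  exact hF.2 _ _ h1 (H.filt_up hF h2 t)

lemma modF_anti {F : Set A} (hF : H.IsFilter F) {a b : A} (d : A)
    (h : H.imp a b ∈ F) : H.imp (H.imp b d) (H.imp a d) ∈ F :=
  H.filt_up hF h (H.thmB a b d)

lemma Fg_isFilter (X : Set A) : H.IsFilter (H.Fg X) := by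
  constructor
  · exact Set.mem_sInter.mpr fun t ht => ht.1.1
  · intro a b ha hab
    exact Set.mem_sInter.mpr fun t ht =>
      ht.1.2 a b (Set.mem_sInter.mp ha t ht) (Set.mem_sInter.mp hab t ht)

lemma subset_Fg (X : Set A) : X ⊆ H.Fg X :=
  fun _ hx => Set.mem_sInter.mpr fun _ ht => ht.2 hx

lemma Fg_subset {X F : Set A} (hF : H.IsFilter F) (hX : X ⊆ F) : H.Fg X ⊆ F :=
  fun x hx => Set.mem_sInter.mp hx F ⟨hF, hX⟩

lemma deduction {F : Set A} (hF : H.IsFilter F) {a b : A}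
    (hb : b ∈ H.Fg (insert a F)) : H.imp a b ∈ F := by
  have hD : H.IsFilter {x | H.imp a x ∈ F} := by
    constructor
    · show H.imp a H.one ∈ F
      rw [H.imp_one' a]; exact hF.1
    · intro x y hx hxy
      exact hF.2 _ _ hx (H.filt_up hF hxy (H.S a x y))
  have hsub : insert a F ⊆ {x | H.imp a x ∈ F} := by
    intro x hx
    rcases hx with rfl | hx
    · show H.imp x x ∈ F
      rw [H.one_eq]; exact hF.1
    · exact H.filt_up hF hx (H.K x a)
  exact H.Fg_subset hD hsub hb

lemma exists_upper {F : Set A} (hirr : H.MeetIrred F) {a b : A}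
    (ha : a ∉ F) (hb : b ∉ F) :
    ∃ c, c ∉ F ∧ H.imp a c ∈ F ∧ H.imp b c ∈ F := by
  obtain ⟨hF, -, hmeet⟩ := hirr
  have hGf := H.Fg_isFilter (insert a F)
  have hKf := H.Fg_isFilter (insert b F)
  have hFG : F ⊂ H.Fg (insert a F) :=
    ⟨(Set.subset_insert a F).trans (H.subset_Fg _),
      fun hs => ha (hs (H.subset_Fg _ (Set.mem_insert a F)))⟩
  have hFK : F ⊂ H.Fg (insert b F) :=
    ⟨(Set.subset_insert b F).trans (H.subset_Fg _),
      fun hs => hb (hs (H.subset_Fg _ (Set.mem_insert b F)))⟩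
  have hne := hmeet _ _ hGf hKf hFG hFK
  have hsub : F ⊆ H.Fg (insert a F) ∩ H.Fg (insert b F) :=
    Set.subset_inter hFG.1 hFK.1
  have hns : ¬(H.Fg (insert a F) ∩ H.Fg (insert b F) ⊆ F) :=
    fun h => hne (Set.Subset.antisymm hsub h)
  obtain ⟨c, hc, hcF⟩ := Set.not_subset.mp hns
  exact ⟨c, hcF, H.deduction hF hc.1, H.deduction hF hc.2⟩
end HilbertAlgebra

theorem hilbert_aux {A : Type*} (H : HilbertAlgebra A) (n : ℕ) (F' : ℕ → Set A)
    (hirr' : ∀ m, m ≤ n → H.MeetIrred (F' m))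
    (hssub : ∀ m m', m < m' → m' ≤ n → F' m ⊂ F' m') :
    ∀ k, k ≤ n → ∃ a : ℕ → A,
      (∀ j i, j < i → i ≤ k → H.imp (a j) (a i) = H.one) ∧
      (∀ j i, j < i → i ≤ k → H.imp (a i) (a j) = a j) ∧
      (∀ i, i ≤ k → a i ∉ F' (n - i)) ∧
      (∀ i, 1 ≤ i → i ≤ k → a i ∈ F' (n - i + 1)) := by
  have hfilt : ∀ m, m ≤ n → H.IsFilter (F' m) := fun m hm => (hirr' m hm).1
  intro k
  induction k with
  | zero =>
    intro _
    obtain ⟨x, hx⟩ := (Set.ne_univ_iff_exists_notMem _).mp (hirr' n le_rfl).2.1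
    refine ⟨fun _ => x, ?_, ?_, ?_, ?_⟩
    · intro j i hji hik; omega
    · intro j i hji hik; omega
    · intro i hi
      obtain rfl : i = 0 := Nat.le_zero.mp hi
      simpa using hx
    · intro i h1 h2; omega
  | succ k ih =>
    intro hk1
    obtain ⟨a, g0, g1, g2, g3⟩ := ih (Nat.le_of_succ_le hk1)
    have hlt : n - (k + 1) < n - k := by omega
    have hFGsub : F' (n - (k + 1)) ⊂ F' (n - k) := hssub _ _ hlt (by omega)
    have hFf : H.IsFilter (F' (n - (k + 1))) := hfilt _ (by omega)
    have hGf : H.IsFilter (F' (n - k)) := hfilt _ (by omega)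
    obtain ⟨u, huG, huF⟩ := Set.exists_of_ssubset hFGsub
    have hDG : a k ∉ F' (n - k) := g2 k le_rfl
    have hDF : a k ∉ F' (n - (k + 1)) := fun h => hDG (hFGsub.1 h)
    obtain ⟨c, hcF, hucF, hDcF⟩ :=
      H.exists_upper (hirr' (n - (k + 1)) (by omega)) huF hDF
    have hcG : c ∈ F' (n - k) := hGf.2 u c huG (hFGsub.1 hucF)
    have hcDF : H.imp c (a k) ∉ F' (n - (k + 1)) :=
      fun h => hDG (hGf.2 c (a k) hcG (hFGsub.1 h))
    obtain ⟨w, hwF, hcwF, hcDwF⟩ :=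
      H.exists_upper (hirr' (n - (k + 1)) (by omega)) hcF hcDF
    have hwG : w ∈ F' (n - k) := hGf.2 c w hcG (hFGsub.1 hcwF)
    set E := H.imp (H.imp (H.imp w (a k)) w) w with hEdef
    have hEF : E ∉ F' (n - (k + 1)) := by
      have h1 : H.imp (H.imp w (a k)) (H.imp c (a k)) ∈ F' (n - (k + 1)) :=
        H.modF_anti hFf (a k) hcwF
      have h2 : H.imp (H.imp w (a k)) w ∈ F' (n - (k + 1)) :=
        H.modF_trans hFf h1 hcDwF
      exact fun hE => hwF (hFf.2 _ w h2 hE)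
    have hEG : E ∈ F' (n - k) :=
      H.filt_up hGf hwG (H.K w (H.imp (H.imp w (a k)) w))
    have hDE : H.imp (a k) E = H.one := H.lemA (a k) w
    classical
    refine ⟨Function.update a (k + 1) E, ?_, ?_, ?_, ?_⟩
    · intro j i hji hik
      by_cases hi : i = k + 1
      · subst hi
        have hj : j ≠ k + 1 := by omega
        rw [Function.update_self, Function.update_of_ne hj]
        rcases Nat.lt_succ_iff_lt_or_eq.mp hji with hj' | rfl
        · exact H.trans' (g0 j k hj' le_rfl) hDE
        · exact hDE
      · have hj : j ≠ k + 1 := by omega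
        rw [Function.update_of_ne hi, Function.update_of_ne hj]
        exact g0 j i hji (by omega)
    · intro j i hji hik
      by_cases hi : i = k + 1
      · subst hi
        have hj : j ≠ k + 1 := by omega
        rw [Function.update_self, Function.update_of_ne hj]
        rcases Nat.lt_succ_iff_lt_or_eq.mp hji with hj' | rfl
        · have h1 := H.anti (a j) hDE
          rw [g1 j k hj' le_rfl] at h1
          exact H.antisymm _ _ h1 (H.K (a j) E)
        · exact H.lemB (a j) w
      · have hj : j ≠ k + 1 := by omega
        rw [Function.update_of_ne hi, Function.update_of_ne hj]
        exact g1 j i hji (by omega)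
    · intro i hik
      by_cases hi : i = k + 1
      · subst hi
        rw [Function.update_self]
        exact hEF
      · rw [Function.update_of_ne hi]
        exact g2 i (by omega)
    · intro i h1i hik
      by_cases hi : i = k + 1
      · subst hi
        rw [Function.update_self]
        have heq : n - (k + 1) + 1 = n - k := by omega
        rw [heq]
        exact hEG
      · rw [Function.update_of_ne hi]
        exact g3 i h1i (by omega)

/-- From a chain `F₀ ⊊ ⋯ ⊊ Fₙ` of meet irreducible implicative filters one
obtains a chain `a₀ < ⋯ < aₙ < 1` forming a subuniverse of `A` with
`aₙ ∉ F₀`. -/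
theorem hilbert_chain_of_filters {A : Type*} (H : HilbertAlgebra A) (n : ℕ)
    (F : Fin (n + 1) → Set A)
    (hirr : ∀ i, H.MeetIrred (F i))
    (hchain : ∀ i j : Fin (n + 1), i < j → F i ⊂ F j) :
    ∃ a : Fin (n + 1) → A,
      (∀ i j : Fin (n + 1), i < j → H.le (a i) (a j) ∧ a i ≠ a j) ∧
      (∀ i, H.le (a i) H.one ∧ a i ≠ H.one) ∧
      (∀ i j : Fin (n + 1), j < i → H.imp (a i) (a j) = a j) ∧
      a (Fin.last n) ∉ F 0 := by
  set F' : ℕ → Set A := fun m => F ⟨min m n, Nat.lt_succ_of_le (min_le_right m n)⟩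
    with hF'def
  have hF'eq : ∀ m (hm : m ≤ n), F' m = F ⟨m, Nat.lt_succ_of_le hm⟩ := by
    intro m hm
    simp only [hF'def]
    exact congrArg F (Fin.ext (Nat.min_eq_left hm))
  have hirr' : ∀ m, m ≤ n → H.MeetIrred (F' m) := fun m _ => hirr _
  have hssub : ∀ m m', m < m' → m' ≤ n → F' m ⊂ F' m' := by
    intro m m' hmm hm'
    rw [hF'eq m (by omega), hF'eq m' hm']
    exact hchain _ _ (by simp [Fin.lt_def]; omega)
  have hfilt : ∀ m, H.IsFilter (F' m) := fun m => (hirr _).1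
  obtain ⟨a, g0, g1, g2, g3⟩ := hilbert_aux H n F' hirr' hssub n le_rfl
  have hmono : ∀ m m', m ≤ m' → m' ≤ n → F' m ⊆ F' m' := by
    intro m m' h1 h2
    rcases Nat.lt_or_ge m m' with h | h
    · exact (hssub m m' h h2).1
    · have : m = m' := by omega
      rw [this]
  refine ⟨fun i => a i.val, ?_, ?_, ?_, ?_⟩
  · intro i j hij
    have hij' : (i : ℕ) < j := hij
    have hjn : (j : ℕ) ≤ n := Nat.lt_succ_iff.mp j.isLt
    refine ⟨g0 i j hij' hjn, ?_⟩
    intro heq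
    have hjm : a j ∈ F' (n - (j : ℕ) + 1) := g3 j (by omega) hjn
    have hsub2 : F' (n - (j : ℕ) + 1) ⊆ F' (n - (i : ℕ)) :=
      hmono _ _ (by omega) (by omega)
    have heq' : a (i : ℕ) = a (j : ℕ) := heq
    exact g2 i (by omega) (by rw [heq']; exact hsub2 hjm)
  · intro i
    have hin : (i : ℕ) ≤ n := Nat.lt_succ_iff.mp i.isLt
    refine ⟨H.imp_one' _, ?_⟩
    intro h
    have h' : a (i : ℕ) = H.one := h
    exact g2 i (by omega) (by rw [h']; exact (hfilt _).1)
  · intro i j hji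
    exact g1 j i hji (Nat.lt_succ_iff.mp i.isLt)
  · have h0 : F' 0 = F 0 := by
      rw [hF'eq 0 (Nat.zero_le n)]
      exact congrArg F (Fin.ext (by simp))
    have := g2 n le_rfl
    rw [Nat.sub_self, h0] at this
    exact this
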